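/- arXiv:2407.14441 — 2 statements merged into one kernel-verified Lean document; each statement's English description precedes it below -/
import Mathlib

section
/- Let M ∈ [0, 2] and let β₀, β₁, β₂ ∈ ℝ. Then the uniform energy E_U attains its infimum over S_C(M) at a real vector: there exists ζ_g ∈ S_R(M) such that E_U(ζ_g) ≤ E_U(ξ) for all ξ ∈ S_C(M). -/
noncomputable section

/-- τ for complex 5-vectors (ξ₂, ξ₁, ξ₀, ξ₋₁, ξ₋₂). -/
def tauC (z2 z1 z0 zm1 zm2 : ℂ) : ℂ :=
  2 * ((starRingEnd ℂ) z2 * z1 + (starRingEnd ℂ) zm1 * zm2)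
    + (Real.sqrt 6 : ℂ) * ((starRingEnd ℂ) z1 * z0 + (starRingEnd ℂ) z0 * zm1)

/-- δ for complex 5-vectors. -/
def deltaC (z2 z1 z0 zm1 zm2 : ℂ) : ℂ :=
  2 * z2 * zm2 - 2 * z1 * zm1 + z0 ^ 2

/-- F_z for complex 5-vectors. -/
def FzC (z2 z1 z0 zm1 zm2 : ℂ) : ℝ :=
  2 * (‖z2‖ ^ 2 - ‖zm2‖ ^ 2)
    + ‖z1‖ ^ 2 - ‖zm1‖ ^ 2

/-- Membership in S_C(M): mass and magnetization constraints. -/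
def memSC (M : ℝ) (z2 z1 z0 zm1 zm2 : ℂ) : Prop :=
  ‖z2‖ ^ 2 + ‖z1‖ ^ 2 + ‖z0‖ ^ 2
      + ‖zm1‖ ^ 2 + ‖zm2‖ ^ 2 = 1 ∧
  2 * ‖z2‖ ^ 2 + ‖z1‖ ^ 2
      - ‖zm1‖ ^ 2 - 2 * ‖zm2‖ ^ 2 = M

/-- The uniform energy E_U. -/
def EU (b0 b1 b2 M : ℝ) (z2 z1 z0 zm1 zm2 : ℂ) : ℝ :=
  (1 / 2) * (b1 * ‖tauC z2 z1 z0 zm1 zm2‖ ^ 2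
    + (b2 / 5) * ‖deltaC z2 z1 z0 zm1 zm2‖ ^ 2
    + b0 + b1 * M ^ 2)

/-!
Write `X = ‖τ‖²` and `Y = ‖δ‖²`. On `S_C(M)` these satisfy `X + 4 Y ≤ 4 - M²`. Indeed
`‖τ‖² + F_z²` is the squared length of the spin vector `⟨F⟩`, while `‖ξ‖` and `δ` are invariant
under spin rotations; a rotation about the z-axis followed by one about the y-axis turns `⟨F⟩`
into the z-direction, and for the rotated vector `F_z² + 4 ‖δ‖² ≤ 4 ‖ξ‖⁴` is an instance of
Cauchy–Schwarz. Since `E_U` is affine in `(X, Y)`, its infimum over this triangle is attained at a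
vertex, and the three vertices are realised by real vectors: the cyclic, the ferromagnetic and
the nematic state.
-/

open Matrix

section Wigner

variable {R : Type*} [CommRing R]

/-- The spin-2 matrix of the rotation by `β` about the y-axis, for `c = cos (β/2)`,
`s = sin (β/2)` and `r = √6`; indices `0, …, 4` stand for `m = 2, …, -2`. Its entries are
homogeneous quartics in `c, s`, so the identities below hold without assuming `c² + s² = 1`. -/
def wigner (c s r : R) : Matrix (Fin 5) (Fin 5) R :=
  !![c^4, -2*c^3*s, r*c^2*s^2, -2*c*s^3, s^4;
     2*c^3*s, c^4-3*c^2*s^2, r*(c*s^3-c^3*s), 3*c^2*s^2-s^4, -2*c*s^3;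
     r*c^2*s^2, r*(c^3*s-c*s^3), c^4-4*c^2*s^2+s^4, r*(c*s^3-c^3*s), r*c^2*s^2;
     2*c*s^3, 3*c^2*s^2-s^4, r*(c^3*s-c*s^3), c^4-3*c^2*s^2, -2*c^3*s;
     s^4, 2*c*s^3, r*c^2*s^2, 2*c^3*s, c^4]

def spinZ : Matrix (Fin 5) (Fin 5) R := diagonal ![2, 1, 0, -1, -2]

/-- `2 F_x`, i.e. `F₊ + F₋`. -/
def spinX (r : R) : Matrix (Fin 5) (Fin 5) R :=
  !![0, 2, 0, 0, 0; 2, 0, r, 0, 0; 0, r, 0, r, 0; 0, 0, r, 0, 2; 0, 0, 0, 2, 0]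

def singletForm : Matrix (Fin 5) (Fin 5) R :=
  !![0, 0, 0, 0, 1; 0, 0, 0, -1, 0; 0, 0, 1, 0, 0; 0, -1, 0, 0, 0; 1, 0, 0, 0, 0]

theorem wigner_transpose_mul_self (c s r : R) (hr : r ^ 2 = 6) :
    (wigner c s r)ᵀ * wigner c s r = (c ^ 2 + s ^ 2) ^ 4 • 1 := by
  ext i j
  fin_cases i <;> fin_cases j <;>
    simp [wigner, mul_apply, Fin.sum_univ_five] <;> ring_nf <;> simp only [hr] <;> ring

theorem wigner_transpose_mul_singletForm_mul_self (c s r : R) (hr : r ^ 2 = 6) :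
    (wigner c s r)ᵀ * singletForm * wigner c s r = (c ^ 2 + s ^ 2) ^ 4 • singletForm := by
  ext i j
  fin_cases i <;> fin_cases j <;>
    simp [wigner, singletForm, mul_apply, Fin.sum_univ_five] <;> ring_nf <;> simp only [hr] <;> ring

theorem wigner_transpose_mul_spinZ_mul_self (c s r : R) :
    (wigner c s r)ᵀ * spinZ * wigner c s r
      = (c ^ 2 + s ^ 2) ^ 3 • ((c ^ 2 - s ^ 2) • spinZ - (c * s) • spinX r) := by
  ext i j
  fin_cases i <;> fin_cases j <;>
    simp [wigner, spinZ, spinX, mul_apply, Fin.sum_univ_five] <;> ring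

theorem mulVec_dotProduct_mulVec_mulVec {n : Type*} [Fintype n] (A Q : Matrix n n R)
    (u v : n → R) : (A *ᵥ u) ⬝ᵥ (Q *ᵥ (A *ᵥ v)) = u ⬝ᵥ ((Aᵀ * Q * A) *ᵥ v) := by
  rw [← mulVec_mulVec, ← mulVec_mulVec, dotProduct_comm, dotProduct_mulVec, ← mulVec_transpose,
    dotProduct_comm, mulVec_mulVec]

end Wigner

def normSqC (z2 z1 z0 zm1 zm2 : ℂ) : ℝ :=
  ‖z2‖ ^ 2 + ‖z1‖ ^ 2 + ‖z0‖ ^ 2 + ‖zm1‖ ^ 2 + ‖zm2‖ ^ 2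

section HermitianForms

variable (v : Fin 5 → ℂ)

theorem star_dotProduct_self_eq_normSqC :
    star v ⬝ᵥ v = normSqC (v 0) (v 1) (v 2) (v 3) (v 4) := by
  simp [dotProduct, Fin.sum_univ_five, normSqC, Complex.conj_mul']

theorem star_dotProduct_spinZ_mulVec :
    star v ⬝ᵥ (spinZ *ᵥ v) = FzC (v 0) (v 1) (v 2) (v 3) (v 4) := by
  simp [dotProduct, Fin.sum_univ_five, FzC, spinZ, mulVec_diagonal, ← Complex.conj_mul']
  ring

theorem star_dotProduct_spinX_mulVec :
    star v ⬝ᵥ (spinX (Real.sqrt 6 : ℂ) *ᵥ v)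
      = ((2 * (tauC (v 0) (v 1) (v 2) (v 3) (v 4)).re : ℝ) : ℂ) := by
  rw [← Complex.add_conj]
  simp [dotProduct, mulVec, Fin.sum_univ_five, tauC, spinX, map_ofNat]
  ring

theorem dotProduct_singletForm_mulVec :
    v ⬝ᵥ (singletForm *ᵥ v) = deltaC (v 0) (v 1) (v 2) (v 3) (v 4) := by
  simp [dotProduct, mulVec, Fin.sum_univ_five, deltaC, singletForm]
  ring

end HermitianForms

theorem star_wigner_mulVec (c s : ℝ) (v : Fin 5 → ℂ) :
    star (wigner (c : ℂ) s (Real.sqrt 6) *ᵥ v) = wigner (c : ℂ) s (Real.sqrt 6) *ᵥ star v := by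
  ext i
  fin_cases i <;> simp [wigner, mulVec, dotProduct, Fin.sum_univ_five]

theorem exists_wigner_rotation (c s : ℝ) (hcs : c ^ 2 + s ^ 2 = 1) (z2 z1 z0 zm1 zm2 : ℂ) :
    ∃ w2 w1 w0 wm1 wm2 : ℂ,
      normSqC w2 w1 w0 wm1 wm2 = normSqC z2 z1 z0 zm1 zm2 ∧
      deltaC w2 w1 w0 wm1 wm2 = deltaC z2 z1 z0 zm1 zm2 ∧
      FzC w2 w1 w0 wm1 wm2
        = (c ^ 2 - s ^ 2) * FzC z2 z1 z0 zm1 zm2 - 2 * c * s * (tauC z2 z1 z0 zm1 zm2).re := by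
  set A := wigner (c : ℂ) s (Real.sqrt 6)
  set v : Fin 5 → ℂ := ![z2, z1, z0, zm1, zm2]
  have hr : ((Real.sqrt 6 : ℝ) : ℂ) ^ 2 = 6 := by
    exact_mod_cast Real.sq_sqrt (by norm_num : (0 : ℝ) ≤ 6)
  have hcsC : (c : ℂ) ^ 2 + (s : ℂ) ^ 2 = 1 := by exact_mod_cast hcs
  have hherm (Q : Matrix (Fin 5) (Fin 5) ℂ) :
      star (A *ᵥ v) ⬝ᵥ (Q *ᵥ (A *ᵥ v)) = star v ⬝ᵥ ((Aᵀ * Q * A) *ᵥ v) := by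
    rw [star_wigner_mulVec, mulVec_dotProduct_mulVec_mulVec]
  refine ⟨(A *ᵥ v) 0, (A *ᵥ v) 1, (A *ᵥ v) 2, (A *ᵥ v) 3, (A *ᵥ v) 4, ?_, ?_, ?_⟩
  · have h := hherm 1
    rw [Matrix.mul_one, wigner_transpose_mul_self _ _ _ hr, hcsC, one_pow, one_smul, one_mulVec,
      one_mulVec, star_dotProduct_self_eq_normSqC, star_dotProduct_self_eq_normSqC] at h
    exact_mod_cast h
  · have h := mulVec_dotProduct_mulVec_mulVec A singletForm v v
    rw [wigner_transpose_mul_singletForm_mul_self _ _ _ hr, hcsC, one_pow, one_smul,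
      dotProduct_singletForm_mulVec, dotProduct_singletForm_mulVec] at h
    exact h
  · have h := hherm spinZ
    rw [wigner_transpose_mul_spinZ_mul_self, hcsC, one_pow, one_smul, sub_mulVec, smul_mulVec,
      smul_mulVec, dotProduct_sub, dotProduct_smul, dotProduct_smul, star_dotProduct_spinZ_mulVec,
      star_dotProduct_spinZ_mulVec, star_dotProduct_spinX_mulVec] at h
    simp only [v, Matrix.cons_val, smul_eq_mul] at h ⊢
    apply Complex.ofReal_injective
    push_cast at h ⊢
    linear_combination h

theorem exists_phase_rotation (z2 z1 z0 zm1 zm2 : ℂ) :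
    ∃ w2 w1 w0 wm1 wm2 : ℂ,
      normSqC w2 w1 w0 wm1 wm2 = normSqC z2 z1 z0 zm1 zm2 ∧
      deltaC w2 w1 w0 wm1 wm2 = deltaC z2 z1 z0 zm1 zm2 ∧
      FzC w2 w1 w0 wm1 wm2 = FzC z2 z1 z0 zm1 zm2 ∧
      tauC w2 w1 w0 wm1 wm2 = ‖tauC z2 z1 z0 zm1 zm2‖ := by
  set τ := tauC z2 z1 z0 zm1 zm2
  set u := Complex.exp (Complex.arg τ * Complex.I)
  have hu : ‖u‖ = 1 := Complex.norm_exp_ofReal_mul_I _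
  have huu : u * (starRingEnd ℂ) u = 1 := by
    rw [Complex.mul_conj', hu]; norm_num
  have hτ : (starRingEnd ℂ) u * τ = ‖τ‖ := by
    conv_lhs => rw [← Complex.norm_mul_exp_arg_mul_I τ]
    linear_combination (‖τ‖ : ℂ) * huu
  refine ⟨u ^ 2 * z2, u * z1, z0, (starRingEnd ℂ) u * zm1, (starRingEnd ℂ) u ^ 2 * zm2,
    ?_, ?_, ?_, ?_⟩
  · simp [normSqC, hu]
  · simp only [deltaC]
    linear_combination (2 * z2 * zm2 * (u * (starRingEnd ℂ) u + 1) - 2 * z1 * zm1) * huu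
  · simp [FzC, hu]
  · rw [← hτ]
    simp only [τ, tauC, map_mul, map_pow, Complex.conj_conj]
    linear_combination
      ((starRingEnd ℂ) u * 2 * ((starRingEnd ℂ) z2 * z1 + (starRingEnd ℂ) zm1 * zm2)) * huu

theorem exists_half_angle (p q : ℝ) :
    ∃ c s : ℝ, c ^ 2 + s ^ 2 = 1 ∧ ((c ^ 2 - s ^ 2) * p - 2 * c * s * q) ^ 2 = p ^ 2 + q ^ 2 := by
  set z : ℂ := ⟨p, -q⟩
  set θ := Complex.arg z
  refine ⟨Real.cos (θ / 2), Real.sin (θ / 2), Real.cos_sq_add_sin_sq _, ?_⟩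
  have hcos : Real.cos (θ / 2) ^ 2 - Real.sin (θ / 2) ^ 2 = Real.cos θ := by
    rw [← Real.cos_two_mul', mul_div_cancel₀ _ two_ne_zero]
  have hsin : 2 * Real.cos (θ / 2) * Real.sin (θ / 2) = Real.sin θ := by
    rw [mul_right_comm, ← Real.sin_two_mul, mul_div_cancel₀ _ two_ne_zero]
  have hp : ‖z‖ * Real.cos θ = p := Complex.norm_mul_cos_arg z
  have hq : q = -(‖z‖ * Real.sin θ) := by linarith [Complex.norm_mul_sin_arg z]
  have hz : ‖z‖ ^ 2 = p ^ 2 + q ^ 2 := by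
    rw [Complex.sq_norm, Complex.normSq_mk]; ring
  rw [hcos, hsin, ← hz, ← hp, hq]
  linear_combination ‖z‖ ^ 2 * (Real.cos θ ^ 2 + Real.sin θ ^ 2 + 1) * Real.cos_sq_add_sin_sq θ

theorem FzC_sq_add_four_mul_sq_norm_deltaC_le (z2 z1 z0 zm1 zm2 : ℂ) :
    FzC z2 z1 z0 zm1 zm2 ^ 2 + 4 * ‖deltaC z2 z1 z0 zm1 zm2‖ ^ 2
      ≤ 4 * normSqC z2 z1 z0 zm1 zm2 ^ 2 := by
  set A := ‖z2‖; set B := ‖z1‖; set C := ‖z0‖; set D := ‖zm1‖; set E := ‖zm2‖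
  have hδ : ‖deltaC z2 z1 z0 zm1 zm2‖ ≤ 2 * A * E + 2 * B * D + C ^ 2 := by
    calc ‖deltaC z2 z1 z0 zm1 zm2‖ ≤ ‖2 * z2 * zm2 - 2 * z1 * zm1‖ + ‖z0 ^ 2‖ := norm_add_le _ _
      _ ≤ ‖2 * z2 * zm2‖ + ‖2 * z1 * zm1‖ + ‖z0 ^ 2‖ := by gcongr; exact norm_sub_le _ _
      _ = 2 * A * E + 2 * B * D + C ^ 2 := by simp [A, B, C, D, E]
  -- Cauchy–Schwarz for (2E, √3 D, √2 C, B) and (2A, √3 B, √2 C, D)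
  have hCS : (4 * A * E + 4 * B * D + 2 * C ^ 2) ^ 2
      ≤ (4 * E ^ 2 + 3 * D ^ 2 + 2 * C ^ 2 + B ^ 2)
        * (4 * A ^ 2 + 3 * B ^ 2 + 2 * C ^ 2 + D ^ 2) := by
    nlinarith [sq_nonneg (E * B - D * A), sq_nonneg (C * (E - A)), sq_nonneg (E * D - A * B),
      sq_nonneg (C * (D - B)), sq_nonneg (D ^ 2 - B ^ 2)]
  have hδ2 : ‖deltaC z2 z1 z0 zm1 zm2‖ ^ 2 ≤ (2 * A * E + 2 * B * D + C ^ 2) ^ 2 :=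
    pow_le_pow_left₀ (norm_nonneg _) hδ 2
  simp only [FzC, normSqC]
  nlinarith

theorem memSC_iff (M : ℝ) (z2 z1 z0 zm1 zm2 : ℂ) :
    memSC M z2 z1 z0 zm1 zm2
      ↔ normSqC z2 z1 z0 zm1 zm2 = 1 ∧ FzC z2 z1 z0 zm1 zm2 = M := by
  unfold memSC normSqC FzC
  constructor <;> rintro ⟨h1, h2⟩ <;> exact ⟨h1, by linarith⟩

theorem sq_norm_tauC_add_FzC_sq_add_four_mul_sq_norm_deltaC_le (z2 z1 z0 zm1 zm2 : ℂ) :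
    ‖tauC z2 z1 z0 zm1 zm2‖ ^ 2 + FzC z2 z1 z0 zm1 zm2 ^ 2 + 4 * ‖deltaC z2 z1 z0 zm1 zm2‖ ^ 2
      ≤ 4 * normSqC z2 z1 z0 zm1 zm2 ^ 2 := by
  obtain ⟨w2, w1, w0, wm1, wm2, hN, hδ, hFz, hτ⟩ := exists_phase_rotation z2 z1 z0 zm1 zm2
  obtain ⟨c, s, hcs, hangle⟩ := exists_half_angle (FzC z2 z1 z0 zm1 zm2) ‖tauC z2 z1 z0 zm1 zm2‖
  obtain ⟨y2, y1, y0, ym1, ym2, hN', hδ', hFz'⟩ := exists_wigner_rotation c s hcs w2 w1 w0 wm1 wm2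
  have h := FzC_sq_add_four_mul_sq_norm_deltaC_le y2 y1 y0 ym1 ym2
  rw [hN', hN, hδ', hδ, hFz', hFz, hτ, Complex.ofReal_re, hangle] at h
  linarith

section RealVectors

variable (x2 x1 x0 xm1 xm2 : ℝ)

theorem tauC_ofReal :
    tauC x2 x1 x0 xm1 xm2
      = ((2 * (x2 * x1 + xm1 * xm2) + Real.sqrt 6 * (x1 * x0 + x0 * xm1) : ℝ) : ℂ) := by
  simp [tauC]

theorem deltaC_ofReal :
    deltaC x2 x1 x0 xm1 xm2 = ((2 * x2 * xm2 - 2 * x1 * xm1 + x0 ^ 2 : ℝ) : ℂ) := by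
  simp [deltaC]

theorem memSC_ofReal (M : ℝ) :
    memSC M x2 x1 x0 xm1 xm2 ↔ x2 ^ 2 + x1 ^ 2 + x0 ^ 2 + xm1 ^ 2 + xm2 ^ 2 = 1 ∧
      2 * x2 ^ 2 + x1 ^ 2 - xm1 ^ 2 - 2 * xm2 ^ 2 = M := by
  simp [memSC, Complex.norm_real]

end RealVectors

theorem exists_real_memSC_of_mem_vertices {M : ℝ} (hM : -2 ≤ M) (hM' : M ≤ 2) {p : ℝ × ℝ}
    (hp : p ∈ ({(0, 0), (4 - M ^ 2, 0), (0, (4 - M ^ 2) / 4)} : Set (ℝ × ℝ))) :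
    ∃ r2 r1 r0 rm1 rm2 : ℝ, memSC M r2 r1 r0 rm1 rm2 ∧
      ‖tauC r2 r1 r0 rm1 rm2‖ ^ 2 = p.1 ∧ ‖deltaC r2 r1 r0 rm1 rm2‖ ^ 2 = p.2 := by
  set γ := Real.sqrt ((2 + M) / 4)
  set σ := Real.sqrt ((2 - M) / 4)
  have hγ : γ ^ 2 = (2 + M) / 4 := Real.sq_sqrt (by linarith)
  have hσ : σ ^ 2 = (2 - M) / 4 := Real.sq_sqrt (by linarith)
  have h2 : Real.sqrt 2 ^ 2 = 2 := Real.sq_sqrt (by norm_num)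
  have h6 : Real.sqrt 6 ^ 2 = 6 := Real.sq_sqrt (by norm_num)
  simp only [memSC_ofReal, tauC_ofReal, deltaC_ofReal, Complex.norm_real, Real.norm_eq_abs, sq_abs]
  rcases hp with rfl | rfl | rfl
  · -- cyclic state
    refine ⟨γ ^ 2, 0, Real.sqrt 2 * γ * σ, 0, -σ ^ 2, ⟨?_, ?_⟩, ?_, ?_⟩ <;> grind
  · -- ferromagnetic state
    refine ⟨γ ^ 4, 2 * γ ^ 3 * σ, Real.sqrt 6 * γ ^ 2 * σ ^ 2, 2 * γ * σ ^ 3, σ ^ 4,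
      ⟨?_, ?_⟩, ?_, ?_⟩ <;> grind
  · -- nematic state
    refine ⟨γ, 0, 0, 0, σ, ⟨?_, ?_⟩, ?_, ?_⟩ <;> grind

theorem exists_vertex_le (a b K : ℝ) :
    ∃ p ∈ ({(0, 0), (K, 0), (0, K / 4)} : Set (ℝ × ℝ)), ∀ X Y : ℝ, 0 ≤ X → 0 ≤ Y →
      X + 4 * Y ≤ K → a * p.1 + b * p.2 ≤ a * X + b * Y := by
  by_cases hab : 0 ≤ a ∧ 0 ≤ b
  · exact ⟨(0, 0), by simp, fun X Y hX hY _ => by nlinarith⟩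
  by_cases hba : 4 * a ≤ b
  · have ha : a < 0 := by
      by_contra! ha
      exact hab ⟨ha, by linarith⟩
    refine ⟨(K, 0), by simp, fun X Y _ hY h => ?_⟩
    have h₁ := mul_le_mul_of_nonpos_left h ha.le
    have h₂ := mul_le_mul_of_nonneg_right hba hY
    dsimp only
    linarith
  · have hb : b < 0 := by
      by_contra! hb
      exact hab ⟨by linarith, hb⟩
    refine ⟨(0, K / 4), by simp, fun X Y hX _ h => ?_⟩
    have h₁ := mul_le_mul_of_nonpos_left h hb.le
    have h₂ := mul_le_mul_of_nonneg_right (not_le.1 hba).le hX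
    dsimp only
    linarith

theorem stmt5 (M b0 b1 b2 : ℝ) (hM0 : 0 ≤ M) (hM2 : M ≤ 2) :
    ∃ r2 r1 r0 rm1 rm2 : ℝ,
      memSC M (r2 : ℂ) (r1 : ℂ) (r0 : ℂ) (rm1 : ℂ) (rm2 : ℂ) ∧
      ∀ z2 z1 z0 zm1 zm2 : ℂ, memSC M z2 z1 z0 zm1 zm2 →
        EU b0 b1 b2 M (r2 : ℂ) (r1 : ℂ) (r0 : ℂ) (rm1 : ℂ) (rm2 : ℂ)
          ≤ EU b0 b1 b2 M z2 z1 z0 zm1 zm2 := by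
  obtain ⟨p, hp, hmin⟩ := exists_vertex_le b1 (b2 / 5) (4 - M ^ 2)
  obtain ⟨r2, r1, r0, rm1, rm2, hmem, hτ, hδ⟩ :=
    exists_real_memSC_of_mem_vertices (by linarith) hM2 hp
  refine ⟨r2, r1, r0, rm1, rm2, hmem, fun z2 z1 z0 zm1 zm2 hz => ?_⟩
  obtain ⟨hN, hFz⟩ := (memSC_iff M z2 z1 z0 zm1 zm2).1 hz
  have hbound := sq_norm_tauC_add_FzC_sq_add_four_mul_sq_norm_deltaC_le z2 z1 z0 zm1 zm2
  rw [hN, hFz] at hbound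
  have h := hmin _ _ (sq_nonneg ‖tauC z2 z1 z0 zm1 zm2‖) (sq_nonneg ‖deltaC z2 z1 z0 zm1 zm2‖)
    (by linarith)
  simp only [EU, hτ, hδ]
  linarith
end
end

section
/- Let M ∈ [0, 1] and β₀, β₁, β₂ ∈ ℝ with β₁ > 0 and β₂ > 0, and set m₃ = √(1+M), m₄ = √(1−M). Then the vector ξ_g = (√3·m₃m₄/4, m₃²/2, −√2·m₃m₄/4, m₄²/2, √3·m₃m₄/4) belongs to S_C(M), satisfies τ(ξ_g) = 0 and δ(ξ_g) = 0, and minimizes E_U over S_C(M): E_U(ξ_g) ≤ E_U(ξ) for all ξ ∈ S_C(M), with minimum value E_U(ξ_g) = (1/2)(β₀ + β₁M²). -/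
noncomputable section

/-! The energy is a constant plus nonnegative multiples of `|τ|²` and `|δ|²`, so every point of
`S_C(M)` at which `τ` and `δ` both vanish minimizes it. The vector `ξ_g` built from any real `a, b`
kills `τ` and `δ` identically (for `τ` because `√6 · √2 = 2√3`), and `a² = 1 + M`, `b² = 1 - M`
put it on `S_C(M)`. -/

theorem EU_eq_of_tauC_eq_zero_of_deltaC_eq_zero {b0 b1 b2 M : ℝ} {z2 z1 z0 zm1 zm2 : ℂ}
    (hτ : tauC z2 z1 z0 zm1 zm2 = 0) (hδ : deltaC z2 z1 z0 zm1 zm2 = 0) :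
    EU b0 b1 b2 M z2 z1 z0 zm1 zm2 = (1 / 2) * (b0 + b1 * M ^ 2) := by
  simp [EU, hτ, hδ]

theorem le_EU {b0 b1 b2 : ℝ} (M : ℝ) (hb1 : 0 ≤ b1) (hb2 : 0 ≤ b2) (z2 z1 z0 zm1 zm2 : ℂ) :
    (1 / 2) * (b0 + b1 * M ^ 2) ≤ EU b0 b1 b2 M z2 z1 z0 zm1 zm2 := by
  have hτ : 0 ≤ b1 * ‖tauC z2 z1 z0 zm1 zm2‖ ^ 2 := by positivity
  have hδ : 0 ≤ (b2 / 5) * ‖deltaC z2 z1 z0 zm1 zm2‖ ^ 2 := by positivity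
  unfold EU
  linarith

theorem tauC_groundState (a b : ℝ) :
    tauC ((Real.sqrt 3 * a * b / 4 : ℝ) : ℂ) ((a ^ 2 / 2 : ℝ) : ℂ)
      ((-(Real.sqrt 2 * a * b / 4) : ℝ) : ℂ) ((b ^ 2 / 2 : ℝ) : ℂ)
      ((Real.sqrt 3 * a * b / 4 : ℝ) : ℂ) = 0 := by
  have h62 : Real.sqrt 6 * Real.sqrt 2 = 2 * Real.sqrt 3 := by
    rw [← Real.sqrt_mul (by norm_num), show (6 : ℝ) * 2 = 2 ^ 2 * 3 by norm_num,
      Real.sqrt_mul (by norm_num), Real.sqrt_sq (by norm_num)]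
  unfold tauC
  simp only [Complex.conj_ofReal]
  norm_cast
  linear_combination (-(a * b * (a ^ 2 + b ^ 2) / 8)) * h62

theorem deltaC_groundState (a b : ℝ) :
    deltaC ((Real.sqrt 3 * a * b / 4 : ℝ) : ℂ) ((a ^ 2 / 2 : ℝ) : ℂ)
      ((-(Real.sqrt 2 * a * b / 4) : ℝ) : ℂ) ((b ^ 2 / 2 : ℝ) : ℂ)
      ((Real.sqrt 3 * a * b / 4 : ℝ) : ℂ) = 0 := by
  unfold deltaC
  norm_cast
  linear_combination (2 * (a * b / 4) ^ 2) * Real.sq_sqrt (show (0 : ℝ) ≤ 3 by norm_num)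
    + (a * b / 4) ^ 2 * Real.sq_sqrt (show (0 : ℝ) ≤ 2 by norm_num)

theorem memSC_groundState {M a b : ℝ} (ha : a ^ 2 = 1 + M) (hb : b ^ 2 = 1 - M) :
    memSC M ((Real.sqrt 3 * a * b / 4 : ℝ) : ℂ) ((a ^ 2 / 2 : ℝ) : ℂ)
      ((-(Real.sqrt 2 * a * b / 4) : ℝ) : ℂ) ((b ^ 2 / 2 : ℝ) : ℂ)
      ((Real.sqrt 3 * a * b / 4 : ℝ) : ℂ) := by
  have h3 := Real.sq_sqrt (show (0 : ℝ) ≤ 3 by norm_num)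
  have h2 := Real.sq_sqrt (show (0 : ℝ) ≤ 2 by norm_num)
  simp only [memSC, Complex.norm_real, Real.norm_eq_abs, sq_abs]
  constructor
  · linear_combination (a * b / 4) ^ 2 * (2 * h3 + h2)
      + ((a ^ 2 + b ^ 2 + 2) / 4) * (ha + hb)
  · linear_combination ((a ^ 2 + 1 + M) / 4) * ha - ((b ^ 2 + 1 - M) / 4) * hb


theorem stmt12 (M b0 b1 b2 : ℝ) (hM0 : 0 ≤ M) (hM1 : M ≤ 1)
    (hb1 : 0 < b1) (hb2 : 0 < b2)
    (m3 m4 : ℝ) (hm3 : m3 = Real.sqrt (1 + M)) (hm4 : m4 = Real.sqrt (1 - M)) :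
    memSC M ((Real.sqrt 3 * m3 * m4 / 4 : ℝ) : ℂ) ((m3 ^ 2 / 2 : ℝ) : ℂ)
        ((-(Real.sqrt 2 * m3 * m4 / 4) : ℝ) : ℂ) ((m4 ^ 2 / 2 : ℝ) : ℂ)
        ((Real.sqrt 3 * m3 * m4 / 4 : ℝ) : ℂ) ∧
    tauC ((Real.sqrt 3 * m3 * m4 / 4 : ℝ) : ℂ) ((m3 ^ 2 / 2 : ℝ) : ℂ)
        ((-(Real.sqrt 2 * m3 * m4 / 4) : ℝ) : ℂ) ((m4 ^ 2 / 2 : ℝ) : ℂ)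
        ((Real.sqrt 3 * m3 * m4 / 4 : ℝ) : ℂ) = 0 ∧
    deltaC ((Real.sqrt 3 * m3 * m4 / 4 : ℝ) : ℂ) ((m3 ^ 2 / 2 : ℝ) : ℂ)
        ((-(Real.sqrt 2 * m3 * m4 / 4) : ℝ) : ℂ) ((m4 ^ 2 / 2 : ℝ) : ℂ)
        ((Real.sqrt 3 * m3 * m4 / 4 : ℝ) : ℂ) = 0 ∧
    (∀ z2 z1 z0 zm1 zm2 : ℂ, memSC M z2 z1 z0 zm1 zm2 →
      EU b0 b1 b2 M ((Real.sqrt 3 * m3 * m4 / 4 : ℝ) : ℂ) ((m3 ^ 2 / 2 : ℝ) : ℂ)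
          ((-(Real.sqrt 2 * m3 * m4 / 4) : ℝ) : ℂ) ((m4 ^ 2 / 2 : ℝ) : ℂ)
          ((Real.sqrt 3 * m3 * m4 / 4 : ℝ) : ℂ)
        ≤ EU b0 b1 b2 M z2 z1 z0 zm1 zm2) ∧
    EU b0 b1 b2 M ((Real.sqrt 3 * m3 * m4 / 4 : ℝ) : ℂ) ((m3 ^ 2 / 2 : ℝ) : ℂ)
        ((-(Real.sqrt 2 * m3 * m4 / 4) : ℝ) : ℂ) ((m4 ^ 2 / 2 : ℝ) : ℂ)
        ((Real.sqrt 3 * m3 * m4 / 4 : ℝ) : ℂ)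
      = (1 / 2) * (b0 + b1 * M ^ 2) := by
  have ha : m3 ^ 2 = 1 + M := by rw [hm3, Real.sq_sqrt]; linarith
  have hb : m4 ^ 2 = 1 - M := by rw [hm4, Real.sq_sqrt]; linarith
  have hτ := tauC_groundState m3 m4
  have hδ := deltaC_groundState m3 m4
  refine ⟨memSC_groundState ha hb, hτ, hδ, fun z2 z1 z0 zm1 zm2 _ => ?_,
    EU_eq_of_tauC_eq_zero_of_deltaC_eq_zero hτ hδ⟩
  rw [EU_eq_of_tauC_eq_zero_of_deltaC_eq_zero hτ hδ]
  exact le_EU M hb1.le hb2.le z2 z1 z0 zm1 zm2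
end
end
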